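/- arXiv:2204.08964 — 2 statements merged into one kernel-verified Lean document; each statement's English description precedes it below -/
import Mathlib

section
/- For the qubit amplitude-decay model with parameters λ ∈ (0,1), a = √(1−λ), the system-output quantum Fisher information F(n) = 4 Σ_{(i_1,…,i_n) ∈ {0,1}^n} ‖ Σ_{j=1}^n K_{i_n}···K̇_{i_j}···K_{i_1} |0⟩ ‖² satisfies lim_{n→∞} F(n)/n = 8/(1−√(1−λ)). -/
open scoped BigOperators Matrix ComplexConjugate Classical
open Matrix

noncomputable section

/-- Squared norm on `ι → ℂ`. -/
def nsq {ι : Type*} [Fintype ι] (v : ι → ℂ) : ℝ := ∑ i, Complex.normSq (v i)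

/-- `A (n-1) ⋯ A j`. -/
def kprodFrom {α : Type*} [Fintype α] [DecidableEq α] {n : ℕ} (A : Fin n → Matrix α α ℂ)
    (j : ℕ) : Matrix α α ℂ :=
  (((List.ofFn A).drop j).reverse).prod

/-- `A (j-1) ⋯ A 0`. -/
def kprodTo {α : Type*} [Fintype α] [DecidableEq α] {n : ℕ} (A : Fin n → Matrix α α ℂ)
    (j : ℕ) : Matrix α α ℂ :=
  (((List.ofFn A).take j).reverse).prod

/-- Kraus operators of the qubit amplitude-decay model at `θ0 = 0`:
`K 0 = |0⟩⟨0| + a|1⟩⟨1|`, `K 1 = b e^{iφ}|0⟩⟨1|`. -/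
def Kop (a b φ : ℝ) : Fin 2 → Matrix (Fin 2) (Fin 2) ℂ := fun i =>
  if i = 0 then !![1, 0; 0, (a : ℂ)]
  else !![0, (b : ℂ) * Complex.exp (Complex.I * φ); 0, 0]

/-- Their `θ`-derivatives at `θ0 = 0`: `K̇ 0 = i|1⟩⟨0| + i a|0⟩⟨1|`, `K̇ 1 = |1⟩⟨0|`. -/
def Kdop (a : ℝ) : Fin 2 → Matrix (Fin 2) (Fin 2) ℂ := fun i =>
  if i = 0 then !![0, Complex.I * (a : ℂ); Complex.I, 0]
  else !![0, 0; 1, 0]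

/-- The initial (stationary) system state `|0⟩`. -/
def e0 : Fin 2 → ℂ := fun i => if i = 0 then 1 else 0
/-- The system-output quantum Fisher information at `θ0 = 0`:
`F(n) = 4 ∑_𝐢 ‖∑ⱼ K_{iₙ}⋯K̇_{i_j}⋯K_{i_1}|0⟩‖²`. -/
def Fqfi (a b φ : ℝ) (n : ℕ) : ℝ :=
  4 * ∑ g : Fin n → Fin 2,
    nsq (∑ j : Fin n,
      (kprodFrom (fun l : Fin n => Kop a b φ (g l)) ((j : ℕ) + 1)
        * Kdop a (g j)
        * kprodTo (fun l : Fin n => Kop a b φ (g l)) (j : ℕ)).mulVec e0)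

/-!
Write `F(n) = 4 ∑_g ‖D_g‖²`, where `D_g` is the derivative vector along the Kraus trajectory
`g`. Appending a step `i` gives `D_{g i} = K_i D_g + K̇_i S_g`, where `S_g = K_g |0⟩` vanishes
unless `g` is the all-`0` trajectory, because `|0⟩` is stationary. Summed over `i`, trace
preservation `∑ K_i† K_i = 1` leaves `‖D_g‖²` unchanged on every other trajectory, while along
`0⋯0` one has `D = i βₙ |1⟩` with `βₙ = ∑_{k<n} aᵏ`, and the new step adds `2 + 2 a βₙ`.
Hence `F(n) = ∑_{k<n} (8 + 8 a β_k)`; as `β_k → 1/(1-a)`, the Cesàro mean tends to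
`8 + 8a/(1-a) = 8/(1-a)`.
-/

open Finset Filter Topology

section KrausProducts

variable {α : Type*} [Fintype α] [DecidableEq α] {n : ℕ}

lemma List.ofFn_snoc {β : Type*} (G : Fin n → β) (M : β) :
    List.ofFn (Fin.snoc G M) = List.ofFn G ++ [M] := by
  rw [List.ofFn_succ']
  simp [List.concat_eq_append]

lemma kprodFrom_self (G : Fin n → Matrix α α ℂ) : kprodFrom G n = 1 := by
  rw [kprodFrom, List.drop_of_length_le (by simp)]
  simp

lemma kprodFrom_snoc (G : Fin n → Matrix α α ℂ) (M : Matrix α α ℂ) {j : ℕ} (hj : j ≤ n) :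
    kprodFrom (Fin.snoc G M) j = M * kprodFrom G j := by
  rw [kprodFrom, List.ofFn_snoc, List.drop_append_of_le_length (by simpa using hj)]
  simp [kprodFrom]

lemma kprodTo_snoc (G : Fin n → Matrix α α ℂ) (M : Matrix α α ℂ) {j : ℕ} (hj : j ≤ n) :
    kprodTo (Fin.snoc G M) j = kprodTo G j := by
  rw [kprodTo, List.ofFn_snoc, List.take_append_of_le_length (by simpa using hj), kprodTo]

lemma kprodTo_snoc_last (G : Fin n → Matrix α α ℂ) (M : Matrix α α ℂ) :
    kprodTo (Fin.snoc G M) (n + 1) = M * kprodTo G n := by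
  rw [kprodTo, List.ofFn_snoc, List.take_of_length_le (by simp), kprodTo,
    List.take_of_length_le (by simp)]
  simp

end KrausProducts

lemma Fin.snoc_const {β : Type*} {n : ℕ} (b : β) :
    (Fin.snoc (fun _ : Fin n => b) b : Fin (n + 1) → β) = fun _ => b := by
  funext l
  refine Fin.lastCases ?_ (fun _ => ?_) l <;> simp

lemma Fin.snoc_eq_const_iff {β : Type*} {n : ℕ} (g : Fin n → β) (c b : β) :
    (Fin.snoc g c : Fin (n + 1) → β) = (fun _ => b) ↔ g = (fun _ => b) ∧ c = b := by
  rw [← Fin.snoc_const b, Fin.snoc_injective2.eq_iff]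

section Trajectory

variable {ι α : Type*} [Fintype α] [DecidableEq α]
  (K Kd : ι → Matrix α α ℂ) (v : α → ℂ) {n : ℕ}

def stateVec (g : Fin n → ι) : α → ℂ :=
  kprodTo (K ∘ g) n *ᵥ v

def derivVec (g : Fin n → ι) : α → ℂ :=
  ∑ j : Fin n, (kprodFrom (K ∘ g) (j + 1) * Kd (g j) * kprodTo (K ∘ g) j) *ᵥ v

lemma stateVec_snoc (g : Fin n → ι) (i : ι) :
    stateVec K v (Fin.snoc g i) = K i *ᵥ stateVec K v g := by
  rw [stateVec, stateVec, Fin.comp_snoc, kprodTo_snoc_last, ← mulVec_mulVec]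

lemma derivVec_snoc (g : Fin n → ι) (i : ι) :
    derivVec K Kd v (Fin.snoc g i) = K i *ᵥ derivVec K Kd v g + Kd i *ᵥ stateVec K v g := by
  rw [derivVec, Fin.comp_snoc, Fin.sum_univ_castSucc, derivVec, mulVec_sum]
  congr 1
  · refine Finset.sum_congr rfl fun j _ => ?_
    rw [Fin.val_castSucc, Fin.snoc_castSucc, kprodFrom_snoc _ _ j.isLt,
      kprodTo_snoc _ _ j.isLt.le, mulVec_mulVec, mul_assoc, mul_assoc, mul_assoc]
  · rw [Fin.val_last, Fin.snoc_last, kprodFrom_self, one_mul, kprodTo_snoc _ _ le_rfl,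
      ← mulVec_mulVec, stateVec]

variable {K v} {i₀ : ι}

lemma stateVec_eq_ite (h₀ : K i₀ *ᵥ v = v) (h : ∀ i ≠ i₀, K i *ᵥ v = 0) (g : Fin n → ι) :
    stateVec K v g = if g = (fun _ => i₀) then v else 0 := by
  induction g using Fin.snocInduction with
  | elim0 => simp [stateVec, kprodTo, Subsingleton.elim Fin.elim0 (fun _ : Fin 0 => i₀)]
  | snoc g i ih =>
    rw [stateVec_snoc, ih]
    simp only [Fin.snoc_eq_const_iff]
    by_cases hg : g = fun _ => i₀
    · by_cases hi : i = i₀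
      · simp [hg, hi, h₀]
      · simp [hg, hi, h i hi]
    · simp [hg]

lemma derivVec_const_succ (h₀ : K i₀ *ᵥ v = v) (h : ∀ i ≠ i₀, K i *ᵥ v = 0) :
    derivVec K Kd v (fun _ : Fin (n + 1) => i₀)
      = K i₀ *ᵥ derivVec K Kd v (fun _ : Fin n => i₀) + Kd i₀ *ᵥ v := by
  rw [← Fin.snoc_const, derivVec_snoc, stateVec_eq_ite h₀ h, if_pos rfl]

lemma sum_nsq_derivVec_succ [Fintype ι] (hK : ∀ x, ∑ i, nsq (K i *ᵥ x) = nsq x)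
    (h₀ : K i₀ *ᵥ v = v) (h : ∀ i ≠ i₀, K i *ᵥ v = 0) :
    ∑ g : Fin (n + 1) → ι, nsq (derivVec K Kd v g)
      = ∑ g : Fin n → ι, nsq (derivVec K Kd v g)
        + (∑ i, nsq (K i *ᵥ derivVec K Kd v (fun _ : Fin n => i₀) + Kd i *ᵥ v)
          - nsq (derivVec K Kd v (fun _ : Fin n => i₀))) := by
  set d := derivVec K Kd v (fun _ : Fin n => i₀)
  have hstep (g : Fin n → ι) : ∑ i, nsq (derivVec K Kd v (Fin.snoc g i))
      = nsq (derivVec K Kd v g)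
        + if g = (fun _ => i₀) then ∑ i, nsq (K i *ᵥ d + Kd i *ᵥ v) - nsq d else 0 := by
    simp only [derivVec_snoc, stateVec_eq_ite h₀ h]
    split_ifs with hg
    · subst hg
      ring
    · simp [hK]
  rw [← (Fin.snocEquiv fun _ => ι).sum_comp, Fintype.sum_prod_type, Finset.sum_comm]
  refine (sum_congr rfl fun g _ => hstep g).trans ?_
  rw [sum_add_distrib, sum_ite_eq', if_pos (mem_univ _)]

end Trajectory

section AmplitudeDecay

open Complex

variable (a b φ : ℝ)

lemma nsq_fin_two (x : Fin 2 → ℂ) : nsq x = normSq (x 0) + normSq (x 1) := by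
  simp [nsq, Fin.sum_univ_two]

lemma Kop_zero_mulVec (x : Fin 2 → ℂ) : Kop a b φ 0 *ᵥ x = ![x 0, a * x 1] := by
  ext l
  fin_cases l <;> simp [Kop, mulVec, dotProduct, Fin.sum_univ_two]

lemma Kop_one_mulVec (x : Fin 2 → ℂ) :
    Kop a b φ 1 *ᵥ x = ![b * exp (I * φ) * x 1, 0] := by
  ext l
  fin_cases l <;> simp [Kop, mulVec, dotProduct, Fin.sum_univ_two, mul_assoc]

lemma Kop_zero_mulVec_e0 : Kop a b φ 0 *ᵥ e0 = e0 := by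
  rw [Kop_zero_mulVec]
  ext l
  fin_cases l <;> simp [e0]

lemma Kop_mulVec_e0_of_ne_zero {i : Fin 2} (hi : i ≠ 0) : Kop a b φ i *ᵥ e0 = 0 := by
  obtain rfl : i = 1 := by omega
  rw [Kop_one_mulVec]
  ext l
  fin_cases l <;> simp [e0]

lemma normSq_exp_I_mul : normSq (exp (I * φ)) = 1 := by
  rw [normSq_eq_norm_sq, mul_comm, norm_exp_ofReal_mul_I, one_pow]

variable {a b φ}

lemma sum_nsq_Kop_mulVec (hab : a ^ 2 + b ^ 2 = 1) (x : Fin 2 → ℂ) :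
    ∑ i, nsq (Kop a b φ i *ᵥ x) = nsq x := by
  simp only [Fin.sum_univ_two, Kop_zero_mulVec, Kop_one_mulVec, nsq_fin_two]
  simp [normSq_mul, normSq_exp_I_mul]
  linear_combination normSq (x 1) * hab

lemma Kdop_zero_mulVec_e0 : Kdop a 0 *ᵥ e0 = ![0, I] := by
  ext l
  fin_cases l <;> simp [Kdop, e0, mulVec, dotProduct]

lemma Kdop_one_mulVec_e0 : Kdop a 1 *ᵥ e0 = ![0, 1] := by
  ext l
  fin_cases l <;> simp [Kdop, e0, mulVec, dotProduct]

lemma derivVec_Kop_const_zero (n : ℕ) :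
    derivVec (Kop a b φ) (Kdop a) e0 (fun _ : Fin n => 0)
      = ![0, I * ↑(∑ k ∈ range n, a ^ k)] := by
  induction n with
  | zero =>
    ext l
    fin_cases l <;> simp [derivVec]
  | succ n ih =>
    rw [derivVec_const_succ _ (Kop_zero_mulVec_e0 a b φ)
      (fun _ hi => Kop_mulVec_e0_of_ne_zero a b φ hi), ih, Kop_zero_mulVec, Kdop_zero_mulVec_e0,
      geom_sum_succ]
    ext l
    fin_cases l
    · simp
    · simp
      ring

lemma sum_nsq_Kop_Kdop_sub_nsq (hab : a ^ 2 + b ^ 2 = 1) (β : ℝ) :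
    ∑ i, nsq (Kop a b φ i *ᵥ ![0, I * β] + Kdop a i *ᵥ e0) - nsq ![0, I * β]
      = 2 + 2 * a * β := by
  have hI : (a : ℂ) * (I * β) + I = I * ↑(a * β + 1) := by push_cast; ring
  simp only [Fin.sum_univ_two, Kop_zero_mulVec, Kop_one_mulVec, Kdop_zero_mulVec_e0,
    Kdop_one_mulVec_e0, nsq_fin_two]
  simp only [Pi.add_apply, cons_val_zero, cons_val_one, zero_add, add_zero, hI, normSq_mul,
    normSq_I, normSq_ofReal, normSq_exp_I_mul, normSq_zero, normSq_one]
  linear_combination β ^ 2 * hab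

lemma Fqfi_eq_sum_nsq_derivVec (n : ℕ) :
    Fqfi a b φ n = 4 * ∑ g : Fin n → Fin 2, nsq (derivVec (Kop a b φ) (Kdop a) e0 g) :=
  rfl

lemma Fqfi_eq_sum_range (hab : a ^ 2 + b ^ 2 = 1) (n : ℕ) :
    Fqfi a b φ n = ∑ k ∈ range n, (8 + 8 * a * ∑ i ∈ range k, a ^ i) := by
  induction n with
  | zero => simp [Fqfi, nsq]
  | succ n ih =>
    have hstep := sum_nsq_derivVec_succ (Kdop a) (n := n) (sum_nsq_Kop_mulVec hab)
      (Kop_zero_mulVec_e0 a b φ) (fun _ hi => Kop_mulVec_e0_of_ne_zero a b φ hi)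
    rw [derivVec_Kop_const_zero, sum_nsq_Kop_Kdop_sub_nsq hab] at hstep
    rw [sum_range_succ, ← ih, Fqfi_eq_sum_nsq_derivVec, Fqfi_eq_sum_nsq_derivVec, hstep]
    ring

end AmplitudeDecay

/-- the quantum Fisher information rate: `lim_{n→∞} F(n)/n = 8/(1-√(1-λ))`. -/
theorem qfi_rate
    (lam : ℝ) (hlam0 : 0 < lam) (hlam1 : lam < 1)
    (a b φ : ℝ) (ha : a = Real.sqrt (1 - lam)) (hb : b = Real.sqrt lam) :
    Filter.Tendsto (fun n : ℕ => Fqfi a b φ n / n) Filter.atTop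
      (nhds (8 / (1 - Real.sqrt (1 - lam)))) := by
  have ha2 : a ^ 2 = 1 - lam := by rw [ha, Real.sq_sqrt (by linarith)]
  have hab : a ^ 2 + b ^ 2 = 1 := by rw [ha2, hb, Real.sq_sqrt hlam0.le]; ring
  have ha0 : 0 ≤ a := ha ▸ Real.sqrt_nonneg _
  have ha1 : a < 1 := by nlinarith
  have hgeom : Tendsto (fun k ↦ ∑ i ∈ range k, a ^ i) atTop (𝓝 (1 - a)⁻¹) :=
    (hasSum_geometric_of_lt_one ha0 ha1).tendsto_sum_nat
  have hterm : Tendsto (fun k ↦ 8 + 8 * a * ∑ i ∈ range k, a ^ i) atTop (𝓝 (8 / (1 - a))) := by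
    convert tendsto_const_nhds.add (tendsto_const_nhds.mul hgeom) using 2
    field_simp [(sub_pos.2 ha1).ne']
    ring
  rw [← ha]
  simpa only [Fqfi_eq_sum_range hab, div_eq_inv_mul] using hterm.cesaro
end
end

section
/- Let ψ_θ be a differentiable unit-vector family in a finite-dimensional bipartite Hilbert space H_s ⊗ H_o with ⟨ψ_{θ0}, ψ̇_{θ0}⟩ = 0 and quantum Fisher information F = 4‖ψ̇_{θ0}‖² at θ0. Let {P_i = |e^o_i⟩⟨e^o_i|} be a rank-one projective measurement on H_o with outcome distribution p_θ(i) = ⟨ψ_θ|(1⊗P_i)|ψ_θ⟩, classical Fisher information I(X) = Σ_{i: p_{θ0}(i)>0} p_{θ0}(i)^{−1}(p'_{θ0}(i))² at θ0, and conditional post-measurement states ψ_θ(i) = (1⊗P_i)ψ_θ / ‖(1⊗P_i)ψ_θ‖ with pure-state quantum Fisher informations F(ψ(i)) = 4(‖ψ̇_{θ0}(i)‖² − |⟨ψ_{θ0}(i), ψ̇_{θ0}(i)⟩|²). Suppose there exists, for each outcome i, a rank-one projective measurement on H_s whose conditional classical Fisher information I(Y|X=i) on the state ψ_θ(i) is such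 that the total classical Fisher information of the two-stage measurement equals F, i.e. I(X) + Σ_i p_{θ0}(i) I(Y|X=i) = F. Then F − I(X) = Σ_i p_{θ0}(i) F(ψ(i)). -/
open scoped BigOperators ComplexConjugate Classical

noncomputable section

def inn {ι : Type*} [Fintype ι] (v w : ι → ℂ) : ℂ := ∑ i, conj (v i) * w i

/-!
Write `φᵢ = (1 ⊗ Pᵢ)ψ` and `φ̇ᵢ = (1 ⊗ Pᵢ)ψ̇`, so that `pᵢ = ‖φᵢ‖²`, `ṗᵢ = 2 Re⟨φᵢ, φ̇ᵢ⟩` and,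
by completeness of `{eᵒᵢ}`, `∑ᵢ 4‖φ̇ᵢ‖² = F`. Differentiating `ψ(i) = φᵢ / ‖φᵢ‖` gives
`pᵢ F(ψ(i)) = 4‖φ̇ᵢ‖² - 4|⟨φᵢ, φ̇ᵢ⟩|² / pᵢ ≤ 4‖φ̇ᵢ‖² - ṗᵢ² / pᵢ`, hence `I(X) + ∑ᵢ pᵢ F(ψ(i)) ≤ F`.
Conversely the normalised family satisfies `Re⟨ψ(i), ψ̇(i)⟩ = 0`, so the Braunstein–Caves
argument (Cauchy–Schwarz against the component of `ψ̇(i)` orthogonal to `ψ(i)`) gives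
`I(Y|X=i) ≤ F(ψ(i))`, and the hypothesis `F = I(X) + ∑ᵢ pᵢ I(Y|X=i)` forces equality.
-/

section
variable {ι : Type*} [Fintype ι]

theorem inn_eq_inner (v w : ι → ℂ) :
    inn v w = inner ℂ (WithLp.toLp 2 v) (WithLp.toLp 2 w) := by
  simp [inn, PiLp.inner_apply, mul_comm]

theorem nsq_eq_norm_sq (v : ι → ℂ) : nsq v = ‖WithLp.toLp 2 v‖ ^ 2 := by
  simp [nsq, EuclideanSpace.norm_sq_eq, Complex.normSq_eq_norm_sq]

theorem nsq_nonneg (v : ι → ℂ) : 0 ≤ nsq v := by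
  rw [nsq_eq_norm_sq]; positivity

theorem inn_self (v : ι → ℂ) : inn v v = nsq v := by
  rw [inn_eq_inner, nsq_eq_norm_sq, inner_self_eq_norm_sq_to_K]; push_cast; rfl

theorem inn_smul_left (c : ℂ) (v w : ι → ℂ) : inn (c • v) w = conj c * inn v w := by
  simp [inn_eq_inner, mul_comm]

theorem inn_smul_right (c : ℂ) (v w : ι → ℂ) : inn v (c • w) = c * inn v w := by
  simp [inn_eq_inner]

theorem inn_sub_right (u v w : ι → ℂ) : inn u (v - w) = inn u v - inn u w := by
  simp [inn_eq_inner]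

theorem nsq_smul (c : ℂ) (v : ι → ℂ) : nsq (c • v) = Complex.normSq c * nsq v := by
  simp [nsq_eq_norm_sq, norm_smul, mul_pow, Complex.normSq_eq_norm_sq]

theorem normSq_inn_le (v w : ι → ℂ) : Complex.normSq (inn v w) ≤ nsq v * nsq w := by
  rw [Complex.normSq_eq_norm_sq, inn_eq_inner, nsq_eq_norm_sq, nsq_eq_norm_sq, ← mul_pow]
  gcongr
  exact norm_inner_le_norm _ _

theorem nsq_sub_smul_sub_normSq_inn {u : ι → ℂ} (hu : nsq u = 1) (v : ι → ℂ) (a : ℂ) :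
    nsq (v - a • u) - Complex.normSq (inn u (v - a • u))
      = nsq v - Complex.normSq (inn u v) := by
  have hu' : inn u u = 1 := by rw [inn_self, hu]; rfl
  rw [inn_sub_right, inn_smul_right, hu', mul_one, Complex.normSq_sub,
    nsq_eq_norm_sq, nsq_eq_norm_sq, WithLp.toLp_sub, WithLp.toLp_smul, norm_sub_sq (𝕜 := ℂ),
    inner_smul_right, norm_smul, mul_pow, ← nsq_eq_norm_sq u, hu, ← inner_conj_symm,
    ← inn_eq_inner, Complex.normSq_eq_norm_sq a]
  simp only [RCLike.re_to_complex, Complex.mul_re, Complex.conj_re, Complex.conj_im]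
  ring

theorem nsq_sub_inn_smul {u : ι → ℂ} (hu : nsq u = 1) (v : ι → ℂ) :
    nsq (v - inn u v • u) = nsq v - Complex.normSq (inn u v) := by
  have h := nsq_sub_smul_sub_normSq_inn hu v (inn u v)
  rwa [inn_sub_right, inn_smul_right, inn_self, hu, Complex.ofReal_one, mul_one, sub_self,
    map_zero, sub_zero] at h

theorem fisher_term_le {a : ι → ℂ} (ha : nsq a ≠ 0) (b : ι → ℂ) {c : ℂ} (hc : c.re = 0) :
    (nsq a)⁻¹ * (2 * (inn a b).re) ^ 2 ≤ 4 * nsq (b - c • a) := by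
  have hre : (inn a b).re = (inn a (b - c • a)).re := by
    simp [inn_sub_right, inn_smul_right, inn_self, hc]
  have hcs := (Complex.re_sq_le_normSq _).trans (normSq_inn_le a (b - c • a))
  rw [hre, inv_mul_le_iff₀ (lt_of_le_of_ne (nsq_nonneg a) (Ne.symm ha))]
  nlinarith

theorem hasDerivAt_inn_right (v : ι → ℂ) {w : ℝ → ι → ℂ} {w' : ι → ℂ} {θ0 : ℝ}
    (hw : ∀ x, HasDerivAt (fun θ => w θ x) (w' x) θ0) :
    HasDerivAt (fun θ => inn v (w θ)) (inn v w') θ0 :=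
  HasDerivAt.fun_sum fun x _ => (hw x).const_mul _

theorem hasDerivAt_nsq {φ : ℝ → ι → ℂ} {φ' : ι → ℂ} {θ0 : ℝ}
    (hφ : ∀ x, HasDerivAt (fun θ => φ θ x) (φ' x) θ0) :
    HasDerivAt (fun θ => nsq (φ θ)) (2 * (inn (φ θ0) φ').re) θ0 := by
  have h := HasDerivAt.fun_sum (u := Finset.univ) fun x _ => (hφ x).norm_sq
  refine (h.congr_deriv ?_).congr_of_eventuallyEq (.of_forall fun θ => ?_)
  · simp [inn, Complex.inner, Complex.re_sum, Finset.mul_sum, mul_comm]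
  · simp [nsq, Complex.normSq_eq_norm_sq]

theorem sum_normSq_inn_eq_nsq [DecidableEq ι] {e : ι → ι → ℂ}
    (he : ∀ i j, inn (e i) (e j) = if i = j then 1 else 0) (w : ι → ℂ) :
    ∑ i, Complex.normSq (inn (e i) w) = nsq w := by
  have hon : Orthonormal ℂ fun i => WithLp.toLp 2 (e i) :=
    orthonormal_iff_ite.mpr fun i j => by rw [← inn_eq_inner, he]
  have hcard : Fintype.card ι = Module.finrank ℂ (EuclideanSpace ℂ ι) := by simp
  let b := OrthonormalBasis.mk hon
    (hon.linearIndependent.span_eq_top_of_card_eq_finrank' hcard).ge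
  simpa [b, Complex.normSq_eq_norm_sq, ← inn_eq_inner, ← nsq_eq_norm_sq] using
    b.sum_sq_norm_inner_right (WithLp.toLp 2 w)

end

section
variable {ι : Type*} [Fintype ι]

def pureQFI (ψ ψ' : ι → ℂ) : ℝ := 4 * (nsq ψ' - Complex.normSq (inn ψ ψ'))

def normalized (v : ι → ℂ) : ι → ℂ := fun x => v x / Real.sqrt (nsq v)

def normalizedDeriv (v v' : ι → ℂ) : ι → ℂ :=
  (Real.sqrt (nsq v) : ℂ)⁻¹ • v' - (((inn v v').re / nsq v : ℝ) : ℂ) • normalized v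

theorem hasDerivAt_normalized {φ : ℝ → ι → ℂ} {φ' : ι → ℂ} {θ0 : ℝ}
    (hφ : ∀ x, HasDerivAt (fun θ => φ θ x) (φ' x) θ0) (h0 : nsq (φ θ0) ≠ 0) (x : ι) :
    HasDerivAt (fun θ => normalized (φ θ) x) (normalizedDeriv (φ θ0) φ' x) θ0 := by
  have hr := ((hasDerivAt_nsq hφ).sqrt h0).ofReal_comp
  have hr0 : (Real.sqrt (nsq (φ θ0)) : ℂ) ≠ 0 := by
    exact_mod_cast (Real.sqrt_pos.2 (lt_of_le_of_ne (nsq_nonneg _) (Ne.symm h0))).ne'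
  have hr2 : (Real.sqrt (nsq (φ θ0)) : ℂ) ^ 2 = nsq (φ θ0) := by
    exact_mod_cast Real.sq_sqrt (nsq_nonneg _)
  refine ((hφ x).div hr hr0).congr_deriv ?_
  simp only [normalizedDeriv, normalized, Pi.sub_apply, Pi.smul_apply, smul_eq_mul]
  push_cast
  rw [← hr2]
  field_simp

theorem normalized_eq_smul (v : ι → ℂ) : normalized v = (Real.sqrt (nsq v) : ℂ)⁻¹ • v :=
  funext fun _ => div_eq_inv_mul _ _

theorem inn_normalized_left (v w : ι → ℂ) :
    inn (normalized v) w = (Real.sqrt (nsq v) : ℂ)⁻¹ * inn v w := by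
  rw [normalized_eq_smul, inn_smul_left, map_inv₀, Complex.conj_ofReal]

theorem nsq_normalized {v : ι → ℂ} (hv : nsq v ≠ 0) : nsq (normalized v) = 1 := by
  rw [normalized_eq_smul, nsq_smul, map_inv₀, Complex.normSq_ofReal,
    ← sq, Real.sq_sqrt (nsq_nonneg v), inv_mul_cancel₀ hv]

theorem re_inn_normalized_normalizedDeriv {v : ι → ℂ} (hv : nsq v ≠ 0) (v' : ι → ℂ) :
    (inn (normalized v) (normalizedDeriv v v')).re = 0 := by
  have hr : (Real.sqrt (nsq v) : ℂ) ^ 2 = nsq v := by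
    exact_mod_cast Real.sq_sqrt (nsq_nonneg v)
  rw [normalizedDeriv, inn_sub_right, inn_smul_right, inn_smul_right, inn_self,
    nsq_normalized hv, inn_normalized_left, ← mul_assoc, ← mul_inv, ← sq, hr, Complex.ofReal_one,
    mul_one, Complex.sub_re, ← Complex.ofReal_inv, Complex.re_ofReal_mul, Complex.ofReal_re]
  ring

/- `normalizedDeriv v v'` differs from `‖v‖⁻¹ • v'` by a multiple of the unit vector
`normalized v`, to which `pureQFI (normalized v)` is blind. -/
theorem nsq_mul_pureQFI_normalized {v : ι → ℂ} (hv : nsq v ≠ 0) (v' : ι → ℂ) :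
    nsq v * pureQFI (normalized v) (normalizedDeriv v v')
      = 4 * (nsq v' - Complex.normSq (inn v v') / nsq v) := by
  rw [pureQFI, mul_left_comm, normalizedDeriv, nsq_sub_smul_sub_normSq_inn (nsq_normalized hv),
    nsq_smul, inn_normalized_left, inn_smul_right]
  simp only [Complex.normSq_mul, map_inv₀, Complex.normSq_ofReal, ← sq,
    Real.sq_sqrt (nsq_nonneg v)]
  field_simp

theorem nsq_mul_pureQFI_normalized_le {v : ι → ℂ} (hv : nsq v ≠ 0) (v' : ι → ℂ) :
    nsq v * pureQFI (normalized v) (normalizedDeriv v v')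
      ≤ 4 * nsq v' - (nsq v)⁻¹ * (2 * (inn v v').re) ^ 2 := by
  have hpos : 0 < nsq v := lt_of_le_of_ne (nsq_nonneg v) (Ne.symm hv)
  have hre : (nsq v)⁻¹ * (2 * (inn v v').re) ^ 2
      ≤ 4 * (Complex.normSq (inn v v') / nsq v) := calc
    _ = 4 * ((inn v v').re ^ 2 / nsq v) := by ring
    _ ≤ 4 * (Complex.normSq (inn v v') / nsq v) := by
        gcongr; exact sq (inn v v').re ▸ Complex.re_sq_le_normSq _
  rw [nsq_mul_pureQFI_normalized hv]
  linarith

end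

section Bipartite
variable {ι κ : Type*}

-- `(1 ⊗ |e⟩⟨e|) w`
def projSnd [Fintype κ] (e : κ → ℂ) (w : ι × κ → ℂ) : ι × κ → ℂ :=
  fun x => e x.2 * inn e (fun u => w (x.1, u))

-- `(⟨e| ⊗ 1) w`, a vector of the second factor
def coeffFst [Fintype ι] (e : ι → ℂ) (w : ι × κ → ℂ) : κ → ℂ :=
  fun u => inn e (fun s => w (s, u))

theorem hasDerivAt_projSnd [Fintype κ] (e : κ → ℂ) {w : ℝ → ι × κ → ℂ} {w' : ι × κ → ℂ}
    {θ0 : ℝ} (hw : ∀ x, HasDerivAt (fun θ => w θ x) (w' x) θ0) (x : ι × κ) :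
    HasDerivAt (fun θ => projSnd e (w θ) x) (projSnd e w' x) θ0 :=
  (hasDerivAt_inn_right e fun u => hw (x.1, u)).const_mul _

theorem hasDerivAt_coeffFst [Fintype ι] (e : ι → ℂ) {w : ℝ → ι × κ → ℂ} {w' : ι × κ → ℂ}
    {θ0 : ℝ} (hw : ∀ x, HasDerivAt (fun θ => w θ x) (w' x) θ0) (u : κ) :
    HasDerivAt (fun θ => coeffFst e (w θ) u) (coeffFst e w' u) θ0 :=
  hasDerivAt_inn_right e fun s => hw (s, u)

theorem coeffFst_sub_smul [Fintype ι] (e : ι → ℂ) (v w : ι × κ → ℂ) (c : ℂ) :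
    coeffFst e (v - c • w) = coeffFst e v - c • coeffFst e w := by
  funext u
  exact (inn_sub_right _ _ _).trans (congrArg _ (inn_smul_right c e _))

theorem nsq_projSnd [Fintype ι] [Fintype κ] {e : κ → ℂ} (he : nsq e = 1) (w : ι × κ → ℂ) :
    nsq (projSnd e w) = ∑ s, Complex.normSq (inn e fun u => w (s, u)) := by
  unfold nsq at he ⊢
  simp only [projSnd, Complex.normSq_mul, Fintype.sum_prod_type, ← Finset.sum_mul, he, one_mul]

theorem sum_nsq_projSnd [Fintype ι] [Fintype κ] [DecidableEq κ] {e : κ → κ → ℂ}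
    (he : ∀ i j, inn (e i) (e j) = if i = j then 1 else 0) (w : ι × κ → ℂ) :
    ∑ i, nsq (projSnd (e i) w) = nsq w := by
  have hunit : ∀ i, nsq (e i) = 1 := fun i => by
    exact_mod_cast (inn_self (e i)).symm.trans ((he i i).trans (if_pos rfl))
  simp only [nsq_projSnd (hunit _)]
  rw [Finset.sum_comm]
  simp only [sum_normSq_inn_eq_nsq he]
  simp [nsq, Fintype.sum_prod_type]

theorem sum_nsq_coeffFst [Fintype ι] [Fintype κ] [DecidableEq ι] {e : ι → ι → ℂ}
    (he : ∀ i j, inn (e i) (e j) = if i = j then 1 else 0) (w : ι × κ → ℂ) :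
    ∑ y, nsq (coeffFst (e y) w) = nsq w := by
  unfold coeffFst
  conv_lhs => unfold nsq
  rw [Finset.sum_comm]
  simp only [sum_normSq_inn_eq_nsq he]
  simp [nsq, Fintype.sum_prod_type_right]

theorem sum_fisher_le_pureQFI [Fintype ι] [Fintype κ] [DecidableEq ι] {e : ι → ι → ℂ}
    (he : ∀ i j, inn (e i) (e j) = if i = j then 1 else 0)
    {ψ : ℝ → ι × κ → ℂ} {ψ' : ι × κ → ℂ} {θ0 : ℝ}
    (hψ' : ∀ x, HasDerivAt (fun θ => ψ θ x) (ψ' x) θ0)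
    (hψ : nsq (ψ θ0) = 1) (hre : (inn (ψ θ0) ψ').re = 0)
    {q : ℝ → ι → ℝ} (hq : ∀ θ y, q θ y = nsq (coeffFst (e y) (ψ θ)))
    {qd : ι → ℝ} (hqd : ∀ y, HasDerivAt (fun θ => q θ y) (qd y) θ0) :
    ∑ y ∈ Finset.univ.filter (fun y => q θ0 y ≠ 0), (q θ0 y)⁻¹ * qd y ^ 2
      ≤ pureQFI (ψ θ0) ψ' := by
  set c := inn (ψ θ0) ψ'
  have hqd' : ∀ y, qd y = 2 * (inn (coeffFst (e y) (ψ θ0)) (coeffFst (e y) ψ')).re :=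
    fun y => (hqd y).unique <| by
      simp only [hq]; exact hasDerivAt_nsq (hasDerivAt_coeffFst _ hψ')
  -- as `Re c = 0`, passing from `ψ'` to its component `ψ' - c • ψ θ0` orthogonal to `ψ θ0`
  -- changes no `qd y`
  calc ∑ y ∈ Finset.univ.filter (fun y => q θ0 y ≠ 0), (q θ0 y)⁻¹ * qd y ^ 2
      ≤ ∑ y ∈ Finset.univ.filter (fun y => q θ0 y ≠ 0),
          4 * nsq (coeffFst (e y) (ψ' - c • ψ θ0)) :=
        Finset.sum_le_sum fun y hy => by
          rw [hq, hqd', coeffFst_sub_smul]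
          exact fisher_term_le (hq θ0 y ▸ (Finset.mem_filter.1 hy).2) _ hre
    _ ≤ ∑ y, 4 * nsq (coeffFst (e y) (ψ' - c • ψ θ0)) :=
        Finset.sum_le_sum_of_subset_of_nonneg (Finset.filter_subset _ _)
          fun y _ _ => mul_nonneg zero_le_four (nsq_nonneg _)
    _ = 4 * (nsq ψ' - Complex.normSq c) := by
        rw [← Finset.mul_sum, sum_nsq_coeffFst he, nsq_sub_inn_smul hψ]

end Bipartite

theorem eq_of_fisher_chain_bounds {ι : Type*} [Fintype ι] {p pd g Fc IYX : ι → ℝ} {F IX : ℝ}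
    (hp : ∀ i, 0 ≤ p i) (hg : ∀ i, 0 ≤ g i) (hgF : ∑ i, g i = F)
    (hIX : IX = ∑ i ∈ Finset.univ.filter (fun i => p i ≠ 0), (p i)⁻¹ * pd i ^ 2)
    (hupper : ∀ i, p i ≠ 0 → p i * Fc i ≤ g i - (p i)⁻¹ * pd i ^ 2)
    (hlower : ∀ i, p i ≠ 0 → IYX i ≤ Fc i)
    (htot : IX + ∑ i, p i * IYX i = F) :
    F - IX = ∑ i, p i * Fc i := by
  set K := Finset.univ.filter (fun i => p i ≠ 0)
  have hK : ∀ f : ι → ℝ, ∑ i ∈ K, p i * f i = ∑ i, p i * f i := fun f =>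
    Finset.sum_filter_of_ne fun i _ h => left_ne_zero_of_mul h
  have hle : ∑ i, p i * Fc i ≤ F - IX := calc
    ∑ i, p i * Fc i = ∑ i ∈ K, p i * Fc i := (hK Fc).symm
    _ ≤ ∑ i ∈ K, (g i - (p i)⁻¹ * pd i ^ 2) :=
        Finset.sum_le_sum fun i hi => hupper i (Finset.mem_filter.1 hi).2
    _ = ∑ i ∈ K, g i - IX := by rw [Finset.sum_sub_distrib, hIX]
    _ ≤ F - IX := by
        rw [← hgF]
        gcongr
        · exact fun i _ _ => hg i
        · exact Finset.subset_univ K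
  have hge : ∑ i, p i * IYX i ≤ ∑ i, p i * Fc i := by
    rw [← hK, ← hK]
    exact Finset.sum_le_sum fun i hi =>
      mul_le_mul_of_nonneg_left (hlower i (Finset.mem_filter.1 hi).2) (hp i)
  linarith

theorem remaining_information_identity_general
    (ds dOut : ℕ) (θ0 : ℝ)
    (ψ : ℝ → (Fin ds × Fin dOut) → ℂ)
    (ψd : (Fin ds × Fin dOut) → ℂ)
    (hψd : ∀ x, HasDerivAt (fun θ => ψ θ x) (ψd x) θ0)
    (F : ℝ) (hF : F = 4 * nsq ψd)
    -- first-stage rank-one projective measurement on H_o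
    (eo : Fin dOut → Fin dOut → ℂ)
    (honb : ∀ i i', inn (eo i) (eo i') = if i = i' then 1 else 0)
    -- (1 ⊗ P_i) ψ_θ
    (condVec : ℝ → Fin dOut → (Fin ds × Fin dOut) → ℂ)
    (hcond : ∀ θ i, condVec θ i =
      fun x => eo i x.2 * ∑ v, conj (eo i v) * ψ θ (x.1, v))
    -- the outcome distribution and its derivative
    (p : ℝ → Fin dOut → ℝ) (hp : ∀ θ i, p θ i = nsq (condVec θ i))
    (pd : Fin dOut → ℝ) (hpd : ∀ i, HasDerivAt (fun θ => p θ i) (pd i) θ0)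
    -- classical Fisher information of the first stage
    (IX : ℝ)
    (hIX : IX = ∑ i ∈ Finset.univ.filter (fun i : Fin dOut => p θ0 i ≠ 0),
      (p θ0 i)⁻¹ * (pd i) ^ 2)
    -- normalized conditional post-measurement states and their derivatives
    (ψc : ℝ → Fin dOut → (Fin ds × Fin dOut) → ℂ)
    (hψc : ∀ θ i, ψc θ i = fun x => condVec θ i x / Real.sqrt (p θ i))
    (ψdc : Fin dOut → (Fin ds × Fin dOut) → ℂ)
    (hψdc : ∀ i, p θ0 i ≠ 0 →
      ∀ x, HasDerivAt (fun θ => ψc θ i x) (ψdc i x) θ0)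
    -- quantum Fisher information of the conditional pure-state models
    (Fc : Fin dOut → ℝ)
    (hFc : ∀ i, p θ0 i ≠ 0 →
      Fc i = 4 * (nsq (ψdc i) - Complex.normSq (inn (ψc θ0 i) (ψdc i))))
    -- second-stage rank-one projective measurements on H_s, one for each outcome i
    (es : Fin dOut → Fin ds → Fin ds → ℂ)
    (honbs : ∀ i y y', inn (es i y) (es i y') = if y = y' then 1 else 0)
    -- conditional second-stage outcome distributions and their derivatives
    (q : ℝ → Fin dOut → Fin ds → ℝ)
    (hq : ∀ θ i y, q θ i y =
      ∑ u, Complex.normSq (∑ s, conj (es i y s) * ψc θ i (s, u)))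
    (qd : Fin dOut → Fin ds → ℝ)
    (hqd : ∀ i, p θ0 i ≠ 0 →
      ∀ y, HasDerivAt (fun θ => q θ i y) (qd i y) θ0)
    -- conditional classical Fisher information of the second stage
    (IYX : Fin dOut → ℝ)
    (hIYX : ∀ i, p θ0 i ≠ 0 →
      IYX i = ∑ y ∈ Finset.univ.filter (fun y : Fin ds => q θ0 i y ≠ 0),
        (q θ0 i y)⁻¹ * (qd i y) ^ 2)
    -- the two-stage measurement attains the quantum Fisher information
    (htot : IX + ∑ i, p θ0 i * IYX i = F) :
    F - IX = ∑ i, p θ0 i * Fc i := by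
  have hφ : ∀ i x, HasDerivAt (fun θ => condVec θ i x) (projSnd (eo i) ψd x) θ0 :=
    fun i x => by simp only [hcond]; exact hasDerivAt_projSnd (eo i) hψd x
  have hpd' : ∀ i, pd i = 2 * (inn (condVec θ0 i) (projSnd (eo i) ψd)).re := fun i =>
    (hpd i).unique (by simp only [hp]; exact hasDerivAt_nsq (hφ i))
  have hψc' : ∀ θ i, ψc θ i = normalized (condVec θ i) := fun θ i => by rw [hψc, hp]; rfl
  have hψdc' : ∀ i, p θ0 i ≠ 0 →
      ψdc i = normalizedDeriv (condVec θ0 i) (projSnd (eo i) ψd) := fun i hi =>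
    funext fun x => (hψdc i hi x).unique <| by
      simp only [hψc']; exact hasDerivAt_normalized (hφ i) (hp θ0 i ▸ hi) x
  refine eq_of_fisher_chain_bounds (fun i => hp θ0 i ▸ nsq_nonneg _)
    (fun i => mul_nonneg zero_le_four (nsq_nonneg (projSnd (eo i) ψd))) ?_ hIX ?_ ?_ htot
  · rw [hF, ← Finset.mul_sum, sum_nsq_projSnd honb]
  · intro i hi
    rw [hFc i hi, hψc', hψdc' i hi, hpd', hp]
    exact nsq_mul_pureQFI_normalized_le (hp θ0 i ▸ hi) _
  · intro i hi
    rw [hIYX i hi, hFc i hi]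
    have hi' : nsq (condVec θ0 i) ≠ 0 := hp θ0 i ▸ hi
    refine sum_fisher_le_pureQFI (honbs i) (hψdc i hi) ?_ ?_ (fun θ y => hq θ i y) (hqd i hi)
    · rw [hψc', nsq_normalized hi']
    · rw [hψc', hψdc' i hi, re_inn_normalized_normalizedDeriv hi']

/-- remaining information identity for two-stage measurements on a
bipartite pure state. If the first-stage measurement on `H_o` combined with suitable
second-stage measurements on `H_s` attains the quantum Fisher information `F`, then
`F - I(X) = ∑ᵢ p_{θ0}(i) F(ψ(i))`, the expected quantum Fisher information of the
conditional post-measurement states. -/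
theorem remaining_information_identity
    (ds dOut : ℕ) (θ0 : ℝ)
    (ψ : ℝ → (Fin ds × Fin dOut) → ℂ) (hψ : ∀ θ, nsq (ψ θ) = 1)
    (ψd : (Fin ds × Fin dOut) → ℂ)
    (hψd : ∀ x, HasDerivAt (fun θ => ψ θ x) (ψd x) θ0)
    (hphase : inn (ψ θ0) ψd = 0)
    (F : ℝ) (hF : F = 4 * nsq ψd)
    -- first-stage rank-one projective measurement on H_o
    (eo : Fin dOut → Fin dOut → ℂ)
    (honb : ∀ i i', inn (eo i) (eo i') = if i = i' then 1 else 0)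
    -- (1 ⊗ P_i) ψ_θ
    (condVec : ℝ → Fin dOut → (Fin ds × Fin dOut) → ℂ)
    (hcond : ∀ θ i, condVec θ i =
      fun x => eo i x.2 * ∑ v, conj (eo i v) * ψ θ (x.1, v))
    -- the outcome distribution and its derivative
    (p : ℝ → Fin dOut → ℝ) (hp : ∀ θ i, p θ i = nsq (condVec θ i))
    (pd : Fin dOut → ℝ) (hpd : ∀ i, HasDerivAt (fun θ => p θ i) (pd i) θ0)
    -- classical Fisher information of the first stage
    (IX : ℝ)
    (hIX : IX = ∑ i ∈ Finset.univ.filter (fun i : Fin dOut => p θ0 i ≠ 0),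
      (p θ0 i)⁻¹ * (pd i) ^ 2)
    -- normalized conditional post-measurement states and their derivatives
    (ψc : ℝ → Fin dOut → (Fin ds × Fin dOut) → ℂ)
    (hψc : ∀ θ i, ψc θ i = fun x => condVec θ i x / Real.sqrt (p θ i))
    (ψdc : Fin dOut → (Fin ds × Fin dOut) → ℂ)
    (hψdc : ∀ i, p θ0 i ≠ 0 →
      ∀ x, HasDerivAt (fun θ => ψc θ i x) (ψdc i x) θ0)
    -- quantum Fisher information of the conditional pure-state models
    (Fc : Fin dOut → ℝ)
    (hFc : ∀ i, p θ0 i ≠ 0 →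
      Fc i = 4 * (nsq (ψdc i) - Complex.normSq (inn (ψc θ0 i) (ψdc i))))
    -- second-stage rank-one projective measurements on H_s, one for each outcome i
    (es : Fin dOut → Fin ds → Fin ds → ℂ)
    (honbs : ∀ i y y', inn (es i y) (es i y') = if y = y' then 1 else 0)
    -- conditional second-stage outcome distributions and their derivatives
    (q : ℝ → Fin dOut → Fin ds → ℝ)
    (hq : ∀ θ i y, q θ i y =
      ∑ u, Complex.normSq (∑ s, conj (es i y s) * ψc θ i (s, u)))
    (qd : Fin dOut → Fin ds → ℝ)
    (hqd : ∀ i, p θ0 i ≠ 0 →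
      ∀ y, HasDerivAt (fun θ => q θ i y) (qd i y) θ0)
    -- conditional classical Fisher information of the second stage
    (IYX : Fin dOut → ℝ)
    (hIYX : ∀ i, p θ0 i ≠ 0 →
      IYX i = ∑ y ∈ Finset.univ.filter (fun y : Fin ds => q θ0 i y ≠ 0),
        (q θ0 i y)⁻¹ * (qd i y) ^ 2)
    -- the two-stage measurement attains the quantum Fisher information
    (htot : IX + ∑ i, p θ0 i * IYX i = F) :
    F - IX = ∑ i, p θ0 i * Fc i :=
  remaining_information_identity_general ds dOut θ0 ψ ψd hψd F hF eo honb condVec hcond p hp pd hpd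
    IX hIX ψc hψc ψdc hψdc Fc hFc es honbs q hq qd hqd IYX hIYX htot

end
end
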